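/- arXiv:2503.03019 — 2 statements merged into one kernel-verified Lean document; each statement's English description precedes it below -/
import Mathlib

section
/- Let a > 0 and d > 0. For every τ with 0 < τ ≤ max{2d/a², h/a}, every h > 0, and every η ∈ (0,1], one has (exp(−4dτη/h²) + (ah/(2d))·(exp(−4dτη/h²) − 1))² + (a²h²(1−η)/(4d²η))·(exp(−4dτη/h²) − 1)² ≤ 1. (This is the stability of the ETD-RK1 upwind finite-difference scheme for u_t + a u_x = d u_{xx} under the time-step constraint τ ≤ max{2d/a², h/a}.) -/
/-!
Write `E = exp (-x)` with `x = 4dτη/h²` and `p = ah/(2d)`. The left-hand side equals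
`1 - 2(1+p)s + (1 + 2p + p²/η)s²` with `s = 1 - E ∈ [0,1)`, so it is at most `1` as soon as
`s (η + 2pη + p²) ≤ 2η(1+p)`. The time-step constraint says `xp ≤ 2η` or `xp² ≤ 2η`, and the
Padé bound `1 - e^{-x} ≤ 2x/(2+x)` turns either of them into the required bound on `s`.
-/

open Real

namespace Real

theorem two_add_mul_one_sub_exp_neg_le {x : ℝ} (hx : 0 ≤ x) :
    (2 + x) * (1 - exp (-x)) ≤ 2 * x := by
  let f : ℝ → ℝ := fun t ↦ (2 + t) * exp (-t) + t
  have hf : ∀ t, HasDerivAt f (1 - (1 + t) * exp (-t)) t := fun t ↦ by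
    have := (((hasDerivAt_id' t).const_add 2).mul (hasDerivAt_neg t).exp).add (hasDerivAt_id' t)
    exact this.congr_deriv (by ring)
  have hmono : Monotone f := by
    refine monotone_of_deriv_nonneg (fun t ↦ (hf t).differentiableAt) fun t ↦ ?_
    rw [(hf t).deriv, sub_nonneg, ← le_div_iff₀ (exp_pos _), exp_neg, div_inv_eq_mul, one_mul]
    linarith [add_one_le_exp t]
  have := hmono hx
  simp only [f, neg_zero, exp_zero] at this
  linarith

theorem add_mul_one_sub_exp_neg_le {x B M : ℝ} (hx : 0 ≤ x) (hB : 0 ≤ B) (hxB : x * B ≤ M) :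
    (2 * B + M) * (1 - exp (-x)) ≤ 2 * M := by
  have hpade := mul_le_mul_of_nonneg_left (two_add_mul_one_sub_exp_neg_le hx) hB
  have hs : 1 - exp (-x) ≤ 1 := by linarith [exp_pos (-x)]
  nlinarith [mul_le_mul_of_nonneg_left hs (sub_nonneg.mpr hxB)]

end Real

theorem upwind_growth_sq_le_one {E p η : ℝ} (hη : 0 < η) (hE : E ≤ 1)
    (h : (1 - E) * (η + 2 * p * η + p ^ 2) ≤ 2 * η * (1 + p)) :
    (E + p * (E - 1)) ^ 2 + p ^ 2 * (1 - η) / η * (E - 1) ^ 2 ≤ 1 := by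
  have hexpand : (E + p * (E - 1)) ^ 2 + p ^ 2 * (1 - η) / η * (E - 1) ^ 2 - 1 =
      (1 - E) * ((1 - E) * (η + 2 * p * η + p ^ 2) - 2 * η * (1 + p)) / η := by
    field_simp
    ring
  have : (1 - E) * ((1 - E) * (η + 2 * p * η + p ^ 2) - 2 * η * (1 + p)) / η ≤ 0 :=
    div_nonpos_of_nonpos_of_nonneg
      (mul_nonpos_of_nonneg_of_nonpos (sub_nonneg.mpr hE) (sub_nonpos.mpr h)) hη.le
  linarith

theorem one_sub_exp_neg_mul_le_of_cfl {x p η : ℝ} (hx : 0 ≤ x) (hp : 0 ≤ p) (hη : η ≤ 1)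
    (hcfl : x * p ≤ 2 * η ∨ x * p ^ 2 ≤ 2 * η) :
    (1 - exp (-x)) * (η + 2 * p * η + p ^ 2) ≤ 2 * η * (1 + p) := by
  have hs0 : 0 ≤ 1 - exp (-x) := sub_nonneg.mpr (exp_le_one_iff.mpr (neg_nonpos.mpr hx))
  have hs1 : 1 - exp (-x) ≤ 1 := by linarith [exp_pos (-x)]
  rcases hcfl with hcfl | hcfl
  · have hpade := add_mul_one_sub_exp_neg_le hx hp hcfl
    nlinarith [mul_nonneg (mul_nonneg hs0 hp) (sub_nonneg.mpr hη)]
  · have hpade := add_mul_one_sub_exp_neg_le hx (sq_nonneg p) hcfl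
    rcases le_total η (p ^ 2) with hηp | hpη
    · nlinarith [mul_nonneg (mul_nonneg hs0 hp) (sub_nonneg.mpr hηp)]
    · -- for `p² ≤ η` the trivial bound `1 - e^{-x} ≤ 1` already suffices
      have hη0 : 0 ≤ η := (sq_nonneg p).trans hpη
      nlinarith [mul_le_mul_of_nonneg_right hs1 (by positivity : 0 ≤ η + 2 * p * η + p ^ 2)]

/-- Stability of the ETD-RK1 upwind finite-difference scheme for
`u_t + a u_x = d u_{xx}` (`a, d > 0`) under the time-step constraint
`τ ≤ max {2d/a², h/a}`: for all `h > 0` and `η ∈ (0,1]`,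
`(exp(−4dτη/h²) + (ah/(2d))(exp(−4dτη/h²) − 1))²
  + (a²h²(1−η)/(4d²η))(exp(−4dτη/h²) − 1)² ≤ 1`. -/
theorem etdrk1_upwind_stability_general
    (a d τ h η : ℝ) (ha : 0 < a) (hd : 0 < d) (hh : 0 < h)
    (hτ0 : 0 < τ) (hτ : τ ≤ max (2 * d / a ^ 2) (h / a))
    (hη0 : 0 < η) (hη1 : η ≤ 1) :
    (Real.exp (-4 * d * τ * η / h ^ 2) +
        (a * h / (2 * d)) * (Real.exp (-4 * d * τ * η / h ^ 2) - 1)) ^ 2 +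
      (a ^ 2 * h ^ 2 * (1 - η) / (4 * d ^ 2 * η)) *
        (Real.exp (-4 * d * τ * η / h ^ 2) - 1) ^ 2 ≤ 1 := by
  set x := 4 * d * τ * η / h ^ 2
  set p := a * h / (2 * d)
  have hx : 0 ≤ x := by positivity
  have hcfl : x * p ≤ 2 * η ∨ x * p ^ 2 ≤ 2 * η := by
    rcases le_max_iff.mp hτ with hτ | hτ
    · right
      have : x * p ^ 2 = τ * a ^ 2 * η / d := by
        simp only [x, p]; field_simp; ring
      rw [this, div_le_iff₀ hd]
      nlinarith [(le_div_iff₀ (by positivity)).mp hτ]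
    · left
      have : x * p = τ * a * (2 * η) / h := by
        simp only [x, p]; field_simp; ring
      rw [this, div_le_iff₀ hh]
      nlinarith [(le_div_iff₀ ha).mp hτ]
  have hcoef : a ^ 2 * h ^ 2 * (1 - η) / (4 * d ^ 2 * η) = p ^ 2 * (1 - η) / η := by
    simp only [p]
    field_simp
    ring
  rw [show -4 * d * τ * η / h ^ 2 = -x by ring, hcoef]
  exact upwind_growth_sq_le_one hη0 (exp_le_one_iff.mpr (neg_nonpos.mpr hx))
    (one_sub_exp_neg_mul_le_of_cfl hx (by positivity) hη1 hcfl)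
end

section
/- For every τ with 0 < τ ≤ 2 and every η > 0, one has Q̂(τ,η) := exp(−2τη) + (1/η)·(exp(−τη) − 1)² ≤ 1. (This is the stability of the semidiscrete ETD-RK1 scheme, continuous in space and discrete in time, for the dimensionless advection–diffusion equation: the squared modulus of its Fourier-space growth factor is at most 1 for every spatial frequency.) -/
/-!
With `x = τη` and `a = e^{-x}`, the claim reads `a² + (1 - a)²/η ≤ 1`; since `1 - a² = (1 - a)(1 + a)`
it reduces to `1 - a ≤ η (1 + a)`, and for `τ ≤ 2` this follows from `2 (1 - e^{-x}) ≤ x (1 + e^{-x})`,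
i.e. `tanh (x/2) ≤ x/2`. The latter holds because `(2 + t) e^{-t} + t` has derivative
`1 - (1 + t) e^{-t} ≥ 0`.
-/

open Real

lemma one_add_mul_exp_neg_le_one (t : ℝ) : (1 + t) * exp (-t) ≤ 1 := by
  calc (1 + t) * exp (-t) ≤ exp t * exp (-t) := by
        gcongr
        linarith [add_one_le_exp t]
    _ = 1 := by rw [← exp_add, add_neg_cancel, exp_zero]

lemma monotone_two_add_mul_exp_neg_add : Monotone fun t : ℝ ↦ (2 + t) * exp (-t) + t := by
  have hderiv (t : ℝ) : HasDerivAt (fun t : ℝ ↦ (2 + t) * exp (-t) + t)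
      (1 - (1 + t) * exp (-t)) t :=
    ((((hasDerivAt_id t).const_add 2).mul (hasDerivAt_neg t).exp).add
      (hasDerivAt_id t)).congr_deriv (by simp only [id]; ring)
  refine monotone_of_deriv_nonneg (fun t ↦ (hderiv t).differentiableAt) fun t ↦ ?_
  rw [(hderiv t).deriv]
  linarith [one_add_mul_exp_neg_le_one t]

lemma two_mul_one_sub_exp_neg_le {x : ℝ} (hx : 0 ≤ x) :
    2 * (1 - exp (-x)) ≤ x * (1 + exp (-x)) := by
  have hmono := monotone_two_add_mul_exp_neg_add hx
  simp only [neg_zero, exp_zero] at hmono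
  linarith

lemma sq_add_one_div_mul_sub_one_sq_le_one {a η : ℝ} (hη : 0 < η) (ha : a ≤ 1)
    (h : 1 - a ≤ η * (1 + a)) : a ^ 2 + 1 / η * (a - 1) ^ 2 ≤ 1 := by
  have : 1 / η * (a - 1) ^ 2 ≤ (1 - a) * (1 + a) := by
    rw [one_div_mul_eq_div, div_le_iff₀ hη, show (a - 1) ^ 2 = (1 - a) * (1 - a) by ring]
    nlinarith [mul_le_mul_of_nonneg_left h (sub_nonneg.mpr ha)]
  nlinarith

/-- Stability of the semidiscrete ETD-RK1 scheme for the dimensionless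
advection–diffusion equation: for `0 < τ ≤ 2` and every `η > 0`,
`Q̂(τ,η) = exp(−2τη) + (1/η)·(exp(−τη) − 1)² ≤ 1`. -/
theorem etdrk1_semidiscrete_stability
    (τ η : ℝ) (hτ0 : 0 < τ) (hτ2 : τ ≤ 2) (hη : 0 < η) :
    Real.exp (-2 * τ * η) + (1 / η) * (Real.exp (-τ * η) - 1) ^ 2 ≤ 1 := by
  set a := exp (-τ * η) with ha
  have hexp2 : exp (-2 * τ * η) = a ^ 2 := by
    rw [ha, sq, ← exp_add]
    ring_nf
  have ha1 : a ≤ 1 := exp_le_one_iff.mpr (by nlinarith)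
  have hkey := two_mul_one_sub_exp_neg_le (mul_pos hτ0 hη).le
  rw [← neg_mul, ← ha] at hkey
  have hcond : 1 - a ≤ η * (1 + a) := by
    refine le_of_mul_le_mul_left ?_ hτ0
    linarith [mul_le_mul_of_nonneg_right hτ2 (sub_nonneg.mpr ha1)]
  rw [hexp2]
  exact sq_add_one_div_mul_sub_one_sq_le_one hη ha1 hcond
end
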